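/- arXiv:1302.4605 — 2 statements merged into one kernel-verified Lean document; each statement's English description precedes it below -/
import Mathlib

section
/- Let p ∈ (0,1] and let T_{c,n} be random vectors whose laws are H_n(B) = ∑_{k=0}^n C(n,k) p^k (1-p)^{n-k} R_k(B), where R_k are Borel probability measures on ℝ^m. If R_n converges weakly to the Dirac measure at 0, then T_{c,n} converges in probability to 0, i.e., for every ε > 0, H_n({x : ‖x‖ > ε}) → 0. -/
/-!
Weak convergence `R_k → δ₀` makes `R_k {‖x‖ > ε}` tend to `0` (portmanteau, applied to a closed
set avoiding `0`). The mass that `H_n` gives to `{‖x‖ > ε}` is the average of these numbers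
against the binomial weights `C(n,k) p^k (1-p)^(n-k)`, which sum to `1` and, since `p > 0`,
tend to `0` for each fixed `k`. Such a weighted average of a null sequence is itself null
(the Toeplitz argument: split off the finitely many `k` before the sequence is small).
-/

open MeasureTheory ENNReal BoundedContinuousFunction Filter Topology Finset

theorem MeasureTheory.ProbabilityMeasure.tendsto_measure_compl_of_tendsto_diracProba
    {Ω ι : Type*} [MeasurableSpace Ω] [TopologicalSpace Ω] [OpensMeasurableSpace Ω]
    [HasOuterApproxClosed Ω]
    {L : Filter ι} {μs : ι → ProbabilityMeasure Ω} {x : Ω}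
    (hμs : Tendsto μs L (𝓝 (diracProba x))) {U : Set Ω} (hU : U ∈ 𝓝 x) :
    Tendsto (fun i ↦ (μs i : Measure Ω) Uᶜ) L (𝓝 0) := by
  have hF : IsClosed (interior U)ᶜ := isOpen_interior.isClosed_compl
  have hlimsup : L.limsup (fun i ↦ (μs i : Measure Ω) (interior U)ᶜ) ≤ 0 := by
    refine (ProbabilityMeasure.limsup_measure_closed_le_of_tendsto hμs hF).trans_eq ?_
    simp [diracProba, Measure.dirac_apply' _ hF.measurableSet, mem_interior_iff_mem_nhds.2 hU]
  have hint : Tendsto (fun i ↦ (μs i : Measure Ω) (interior U)ᶜ) L (𝓝 0) :=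
    tendsto_of_le_liminf_of_limsup_le zero_le hlimsup
  exact tendsto_of_tendsto_of_tendsto_of_le_of_le tendsto_const_nhds hint (fun _ ↦ zero_le)
    fun _ ↦ measure_mono (Set.compl_subset_compl.2 interior_subset)

theorem ENNReal.tendsto_sum_range_mul_of_tendsto_zero {w : ℕ → ℕ → ℝ≥0∞} {a : ℕ → ℝ≥0∞}
    (hw_sum : ∀ n, ∑ k ∈ range (n + 1), w n k ≤ 1)
    (hw : ∀ k, Tendsto (fun n ↦ w n k) atTop (𝓝 0))
    (ha_ne_top : ∀ k, a k ≠ ∞) (ha : Tendsto a atTop (𝓝 0)) :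
    Tendsto (fun n ↦ ∑ k ∈ range (n + 1), w n k * a k) atTop (𝓝 0) := by
  rw [ENNReal.tendsto_atTop_zero]
  intro δ hδ
  have hδ2 : 0 < δ / 2 := ENNReal.half_pos hδ.ne'
  obtain ⟨K, hK⟩ := ENNReal.tendsto_atTop_zero.1 ha _ hδ2
  have hhead : Tendsto (fun n ↦ ∑ k ∈ range K, w n k * a k) atTop (𝓝 0) := by
    simpa using tendsto_finsetSum _ fun k _ ↦
      ENNReal.Tendsto.mul_const (hw k) (Or.inr (ha_ne_top k))
  obtain ⟨N, hN⟩ := ENNReal.tendsto_atTop_zero.1 hhead _ hδ2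
  refine ⟨N, fun n hn ↦ ?_⟩
  have htail : ∑ k ∈ (range (n + 1)).filter (¬ · < K), w n k * a k ≤ δ / 2 :=
    calc ∑ k ∈ (range (n + 1)).filter (¬ · < K), w n k * a k
        ≤ ∑ k ∈ (range (n + 1)).filter (¬ · < K), w n k * (δ / 2) := by
          gcongr with k hk
          exact hK k (not_lt.1 (mem_filter.1 hk).2)
      _ ≤ ∑ k ∈ range (n + 1), w n k * (δ / 2) := sum_le_sum_of_subset (filter_subset _ _)
      _ ≤ δ / 2 := by
          rw [← sum_mul]
          exact mul_le_of_le_one_left' (hw_sum n)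
  calc ∑ k ∈ range (n + 1), w n k * a k
      = ∑ k ∈ (range (n + 1)).filter (· < K), w n k * a k
        + ∑ k ∈ (range (n + 1)).filter (¬ · < K), w n k * a k :=
        (sum_filter_add_sum_filter_not _ _ _).symm
    _ ≤ ∑ k ∈ range K, w n k * a k + δ / 2 := by
        gcongr
        exact fun k hk ↦ mem_range.2 (mem_filter.1 hk).2
    _ ≤ δ / 2 + δ / 2 := by gcongr; exact hN n hn
    _ = δ := ENNReal.add_halves δ

theorem tendsto_choose_mul_pow_sub_atTop (k : ℕ) {q : ℝ} (hq0 : 0 ≤ q) (hq1 : q < 1) :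
    Tendsto (fun n : ℕ ↦ (n.choose k : ℝ) * q ^ (n - k)) atTop (𝓝 0) := by
  rcases hq0.eq_or_lt with rfl | hq
  · refine tendsto_const_nhds.congr' ?_
    filter_upwards [eventually_gt_atTop k] with n hn
    rw [zero_pow (Nat.sub_ne_zero_of_lt hn), mul_zero]
  · have hbound := (tendsto_pow_const_mul_const_pow_of_lt_one k hq0 hq1).div_const (q ^ k)
    rw [zero_div] at hbound
    refine squeeze_zero' (Eventually.of_forall fun n ↦ by positivity) ?_ hbound
    filter_upwards [eventually_ge_atTop k] with n hn
    rw [← Nat.sub_add_cancel hn, pow_add, Nat.add_sub_cancel, mul_div_assoc,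
      mul_div_cancel_right₀ _ (pow_ne_zero k hq.ne')]
    gcongr
    exact_mod_cast (Nat.choose_le_pow _ k).trans (by rw [Nat.sub_add_cancel hn])

theorem ENNReal.tendsto_choose_mul_pow_sub_atTop (k : ℕ) {q : ℝ≥0∞} (hq : q < 1) :
    Tendsto (fun n : ℕ ↦ (n.choose k : ℝ≥0∞) * q ^ (n - k)) atTop (𝓝 0) := by
  lift q to NNReal using hq.ne_top
  have hreal := _root_.tendsto_choose_mul_pow_sub_atTop k q.coe_nonneg (by exact_mod_cast hq)
  simpa [ENNReal.ofReal_mul, ENNReal.ofReal_pow] using ENNReal.tendsto_ofReal hreal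

noncomputable def binomialWeight (p : ℝ≥0∞) (n k : ℕ) : ℝ≥0∞ :=
  n.choose k * p ^ k * (1 - p) ^ (n - k)

theorem sum_binomialWeight {p : ℝ≥0∞} (hp : p ≤ 1) (n : ℕ) :
    ∑ k ∈ range (n + 1), binomialWeight p n k = 1 := by
  have h := add_pow p (1 - p) n
  rw [add_tsub_cancel_of_le hp, one_pow] at h
  rw [h]
  exact sum_congr rfl fun k _ ↦ by simp only [binomialWeight]; ring

theorem tendsto_binomialWeight_atTop {p : ℝ≥0∞} (hp0 : 0 < p) (hp_top : p ≠ ∞) (k : ℕ) :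
    Tendsto (fun n ↦ binomialWeight p n k) atTop (𝓝 0) := by
  have h1p : 1 - p < 1 := ENNReal.sub_lt_self one_ne_top one_ne_zero hp0.ne'
  have h := ENNReal.Tendsto.mul_const (ENNReal.tendsto_choose_mul_pow_sub_atTop k h1p)
    (Or.inr (pow_ne_top hp_top (n := k)))
  rw [zero_mul] at h
  refine h.congr fun n ↦ ?_
  simp only [binomialWeight]
  ring

/-- Corollary (c) of Koul, Müller and Schick: if `R_n` converges weakly to the
Dirac measure at `0`, then random vectors `T_{c,n}` with laws given by the binomial
mixtures `H_n = ∑_{k=0}^n C(n,k) p^k (1-p)^{n-k} R_k` converge in probability to `0`,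
i.e., for every `ε > 0`, `H_n {x : ‖x‖ > ε} → 0`. -/
theorem binomial_mixture_convergence_in_probability
    {m : ℕ} (p : ℝ≥0∞) (hp0 : 0 < p) (hp1 : p ≤ 1)
    (R : ℕ → Measure (Fin m → ℝ)) (hRprob : ∀ k, IsProbabilityMeasure (R k))
    (H : ℕ → Measure (Fin m → ℝ))
    (hH : ∀ n, H n = ∑ k ∈ Finset.range (n + 1),
      ((n.choose k : ℝ≥0∞) * p ^ k * (1 - p) ^ (n - k)) • R k)
    -- weak convergence of `R_n` to the Dirac measure at `0`
    (hR0 : ∀ f : (Fin m → ℝ) →ᵇ ℝ,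
      Filter.Tendsto (fun n => ∫ x, f x ∂(R n)) Filter.atTop
        (nhds (∫ x, f x ∂(Measure.dirac (0 : Fin m → ℝ))))) :
    -- convergence in probability of `T_{c,n}` to `0`
    ∀ ε : ℝ, 0 < ε →
      Filter.Tendsto (fun n => H n {x | ε < ‖x‖}) Filter.atTop (nhds 0) := by
  intro ε hε
  have hRS : Tendsto (fun k ↦ R k {x | ε < ‖x‖}) atTop (𝓝 0) := by
    have hweak : Tendsto (β := ProbabilityMeasure (Fin m → ℝ)) (fun k ↦ ⟨R k, hRprob k⟩) atTop
        (𝓝 (diracProba 0)) :=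
      ProbabilityMeasure.tendsto_iff_forall_integral_tendsto.2 hR0
    have hS : {x : Fin m → ℝ | ε < ‖x‖} = (Metric.closedBall 0 ε)ᶜ := by ext; simp
    simpa [hS] using ProbabilityMeasure.tendsto_measure_compl_of_tendsto_diracProba hweak
      (Metric.closedBall_mem_nhds 0 hε)
  have hHS : ∀ n, H n {x | ε < ‖x‖} =
      ∑ k ∈ range (n + 1), binomialWeight p n k * R k {x | ε < ‖x‖} := by
    simp [hH, Measure.finsetSum_apply, binomialWeight]
  simp only [hHS]
  exact ENNReal.tendsto_sum_range_mul_of_tendsto_zero (fun n ↦ (sum_binomialWeight hp1 n).le)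
    (tendsto_binomialWeight_atTop hp0 (ne_top_of_le_ne_top one_ne_top hp1))
    (fun k ↦ measure_ne_top _ _) hRS
end

section
/- Let p ∈ (0,1] and suppose that for each k, s_k : X^k → ℝ^m is measurable, and that s_n(ξ̃_1,…,ξ̃_n) → 0 in probability where ξ̃_i are i.i.d. with law Q̃ (the conditional law of ξ given δ = 1). Let S_{c,n} be the complete case statistic associated with (s_k). Then S_{c,n} → 0 in probability. -/
/-
Conditionally on the set `A` of complete cases among the first `n` observations, the `ξ_j` with
`j ∈ A` are i.i.d. with law `Q̃`, so the law of `S_{c,n}` is the mixture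
`∑_A p^|A| (1 - p)^(n - |A|) R_|A|`. Hence `P(‖S_{c,n}‖ ≥ ε) = E F(N_n)` with
`F(k) = Q̃^k(‖s_k‖ ≥ ε) → 0` and `N_n ∼ Bin(n, p)`; as `p > 0`, `N_n` exceeds any fixed `K` with
probability tending to `1`, and the mixture tends to `0`.
-/

open MeasureTheory ProbabilityTheory Filter ENNReal

/-- The complete case statistic based on the first `n` observations of a sequence. -/
noncomputable def ccStatSeq {Ω X E : Type*}
    (s : (k : ℕ) → (Fin k → X) → E)
    (δ : ℕ → Ω → Bool) (ξ : ℕ → Ω → X) (n : ℕ) (ω : Ω) : E :=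
  let A : Finset ℕ := (Finset.range n).filter (fun i => δ i ω = true)
  s A.card (fun j => ξ (A.orderIsoOfFin rfl j) ω)

open Finset Topology

theorem Finset.orderEmbOfFin_map {α β : Type*} [LinearOrder α] [LinearOrder β] (s : Finset α)
    (f : α ↪o β) {k : ℕ} (h : #(s.map f.toEmbedding) = k) (i : Fin k) :
    (s.map f.toEmbedding).orderEmbOfFin h i = f (s.orderEmbOfFin (by simpa using h) i) :=
  congrFun (orderEmbOfFin_unique h (fun _ => mem_map_of_mem _ (orderEmbOfFin_mem _ _ _))
    (f.strictMono.comp (s.orderEmbOfFin _).strictMono)).symm i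

theorem MeasureTheory.Measure.ext_of_univ_pi {ι : Type*} [Fintype ι] {α : ι → Type*}
    [∀ i, MeasurableSpace (α i)] {μ ν : Measure (∀ i, α i)} [IsFiniteMeasure μ]
    (h : ∀ s : ∀ i, Set (α i), (∀ i, MeasurableSet (s i)) → μ (Set.univ.pi s) = ν (Set.univ.pi s)) :
    μ = ν := by
  refine ext_of_generate_finite _ generateFrom_pi.symm isPiSystem_pi ?_ ?_
  · rintro _ ⟨s, hs, rfl⟩
    exact h s fun i => hs i (Set.mem_univ i)
  · simpa using h (fun _ => Set.univ) fun _ => MeasurableSet.univ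

theorem MeasureTheory.Measure.pi_map_comp_of_injective {ι κ α : Type*} [Fintype ι] [Fintype κ]
    [DecidableEq ι] [MeasurableSpace α] (ν : ι → Measure α) [∀ i, IsFiniteMeasure (ν i)]
    {e : κ → ι} (he : Function.Injective e) :
    (Measure.pi ν).map (fun v => v ∘ e) =
      (∏ i ∈ (univ.image e)ᶜ, ν i Set.univ) • Measure.pi (fun j => ν (e j)) := by
  have hmeas : Measurable fun v : ι → α => v ∘ e :=
    measurable_pi_lambda _ fun j => measurable_pi_apply (e j)
  refine Measure.ext_of_univ_pi fun t ht => ?_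
  have hpre : (fun v : ι → α => v ∘ e) ⁻¹' Set.univ.pi t =
      Set.univ.pi (Function.extend e t fun _ => Set.univ) := by
    ext v
    simp only [Set.mem_preimage, Set.mem_univ_pi, Function.comp_apply]
    refine ⟨fun hv i => ?_, fun hv j => by simpa [he.extend_apply] using hv (e j)⟩
    by_cases hi : ∃ j, e j = i
    · obtain ⟨j, rfl⟩ := hi
      simpa [he.extend_apply] using hv j
    · simp [Function.extend_apply' _ _ _ hi]
  rw [Measure.map_apply hmeas (.univ_pi ht), hpre, Measure.pi_pi, Measure.smul_apply,
    Measure.pi_pi, smul_eq_mul, ← prod_mul_prod_compl (univ.image e), prod_image he.injOn,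
    mul_comm]
  congr 1
  · refine prod_congr rfl fun i hi => ?_
    rw [Function.extend_apply']
    simpa using hi
  · exact prod_congr rfl fun j _ => by rw [he.extend_apply]

theorem MeasureTheory.Measure.pi_smul {ι : Type*} [Fintype ι] {α : ι → Type*}
    [∀ i, MeasurableSpace (α i)] (ρ : ∀ i, Measure (α i)) [∀ i, IsFiniteMeasure (ρ i)]
    {c : ι → ℝ≥0∞} (hc : ∀ i, c i ≠ ∞) :
    Measure.pi (fun i => c i • ρ i) = (∏ i, c i) • Measure.pi ρ := by
  have := fun i => (ρ i).smul_finite (hc i)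
  refine Measure.pi_eq fun s hs => ?_
  simp only [Measure.smul_apply, Measure.pi_pi, smul_eq_mul, prod_mul_distrib]

theorem ProbabilityTheory.measure_smul_cond {α : Type*} [MeasurableSpace α]
    (μ : Measure α) [IsFiniteMeasure μ] (s : Set α) : μ s • μ[|s] = μ.restrict s := by
  by_cases hs : μ s = 0
  · rw [hs, zero_smul, Measure.restrict_eq_zero.mpr hs]
  · rw [cond, smul_smul, ENNReal.mul_inv_cancel hs (measure_ne_top μ s), one_smul]

theorem tendsto_sum_card_lt_pow_mul_pow {p q : ℝ≥0∞} (hpq : p + q = 1) (hp : p ≠ 0) (K : ℕ) :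
    Tendsto (fun n => ∑ A : Finset (Fin n) with #A < K, p ^ #A * q ^ (n - #A))
      atTop (𝓝 0) := by
  have hp_top : p ≠ ∞ := ne_top_of_le_ne_top one_ne_top (hpq ▸ le_self_add)
  have hq_top : q ≠ ∞ := ne_top_of_le_ne_top one_ne_top (hpq ▸ le_add_self)
  have hr : p / 2 + q < 1 :=
    hpq ▸ ENNReal.add_lt_add_right hq_top (ENNReal.half_lt_self hp hp_top)
  have hbound : ∀ n, ∑ A : Finset (Fin n) with #A < K, p ^ #A * q ^ (n - #A) ≤
      2 ^ K * (p / 2 + q) ^ n := fun n =>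
    calc ∑ A : Finset (Fin n) with #A < K, p ^ #A * q ^ (n - #A)
        ≤ ∑ A : Finset (Fin n) with #A < K, 2 ^ K * ((p / 2) ^ #A * q ^ (n - #A)) := by
          refine sum_le_sum fun A hA => ?_
          calc p ^ #A * q ^ (n - #A) = 2 ^ #A * ((p / 2) ^ #A * q ^ (n - #A)) := by
                rw [← mul_assoc, ← mul_pow, ENNReal.mul_div_cancel two_ne_zero ofNat_ne_top]
            _ ≤ 2 ^ K * ((p / 2) ^ #A * q ^ (n - #A)) := by
                gcongr
                exacts [one_le_two, (mem_filter.1 hA).2.le]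
      _ ≤ ∑ A : Finset (Fin n), 2 ^ K * ((p / 2) ^ #A * q ^ (n - #A)) :=
          sum_le_sum_of_subset (filter_subset _ _)
      _ = 2 ^ K * (p / 2 + q) ^ n := by rw [← mul_sum, Fin.sum_pow_mul_eq_add_pow]
  refine tendsto_of_tendsto_of_tendsto_of_le_of_le tendsto_const_nhds ?_ (fun _ => zero_le) hbound
  simpa using ENNReal.Tendsto.const_mul (a := 2 ^ K)
    (ENNReal.tendsto_pow_atTop_nhds_zero_of_lt_one hr) (Or.inr (pow_ne_top ofNat_ne_top))

theorem tendsto_sum_pow_mul_pow_mul_of_tendsto_zero {p q : ℝ≥0∞} (hpq : p + q = 1) (hp : p ≠ 0)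
    {F : ℕ → ℝ≥0∞} (hF_le : ∀ k, F k ≤ 1) (hF : Tendsto F atTop (𝓝 0)) :
    Tendsto (fun n => ∑ A : Finset (Fin n), p ^ #A * q ^ (n - #A) * F #A) atTop (𝓝 0) := by
  rw [ENNReal.tendsto_atTop_zero]
  intro ε hε
  have hε2 : 0 < ε / 2 := ENNReal.half_pos hε.ne'
  obtain ⟨K, hK⟩ := ENNReal.tendsto_atTop_zero.1 hF _ hε2
  obtain ⟨N, hN⟩ := ENNReal.tendsto_atTop_zero.1 (tendsto_sum_card_lt_pow_mul_pow hpq hp K) _ hε2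
  refine ⟨N, fun n hn => ?_⟩
  calc ∑ A : Finset (Fin n), p ^ #A * q ^ (n - #A) * F #A
      = ∑ A : Finset (Fin n) with #A < K, p ^ #A * q ^ (n - #A) * F #A +
          ∑ A : Finset (Fin n) with ¬#A < K, p ^ #A * q ^ (n - #A) * F #A :=
        (sum_filter_add_sum_filter_not _ _ _).symm
    _ ≤ ∑ A : Finset (Fin n) with #A < K, p ^ #A * q ^ (n - #A) +
          ∑ A : Finset (Fin n), p ^ #A * q ^ (n - #A) * (ε / 2) := by
        refine add_le_add (sum_le_sum fun A _ => mul_le_of_le_one_right' (hF_le _)) ?_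
        refine (sum_le_sum fun A hA => ?_).trans (sum_le_sum_of_subset (filter_subset _ _))
        exact mul_le_mul_right (hK _ (not_lt.1 (mem_filter.1 hA).2)) _
    _ ≤ ε / 2 + ε / 2 := by
        gcongr
        · exact hN n hn
        · rw [← sum_mul, Fin.sum_pow_mul_eq_add_pow, hpq, one_pow, one_mul]
    _ = ε := ENNReal.add_halves ε

section CompleteCase

variable {X E : Type*} {n : ℕ}

/- A sample `v j = (δ_j, ξ_j)`, `j < n`; `ccSample A v` lists the `ξ_j` with `j ∈ A` in increasing
order of `j`, and `ccStat s v` is `S_{c,n}`. -/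
def ccIndices (v : Fin n → Bool × X) : Finset (Fin n) := {i | (v i).1}

noncomputable def ccSample (A : Finset (Fin n)) (v : Fin n → Bool × X) : Fin #A → X :=
  fun j => (v (A.orderEmbOfFin rfl j)).2

noncomputable def ccStat (s : (k : ℕ) → (Fin k → X) → E) (v : Fin n → Bool × X) : E :=
  s #(ccIndices v) (ccSample (ccIndices v) v)

theorem ccStatSeq_eq_ccStat {Ω : Type*} (s : (k : ℕ) → (Fin k → X) → E)
    (δ : ℕ → Ω → Bool) (ξ : ℕ → Ω → X) (n : ℕ) (ω : Ω) :
    ccStatSeq s δ ξ n ω = ccStat s (fun j : Fin n => (δ j ω, ξ j ω)) := by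
  simp only [ccStatSeq, ccStat]
  set B := ccIndices fun j : Fin n => (δ j ω, ξ j ω)
  set A := {i ∈ range n | δ i ω = true}
  have hA : A = B.map (Fin.valOrderEmb n).toEmbedding := by
    ext i
    simp only [A, B, mem_filter, mem_range, Finset.mem_map, ccIndices, mem_univ, true_and]
    exact ⟨fun h => ⟨⟨i, h.1⟩, h.2, rfl⟩, by rintro ⟨i, hδ, rfl⟩; exact ⟨i.isLt, hδ⟩⟩
  have hcard : #A = #B := by rw [hA, card_map]
  congr 1
  rw [Fin.heq_fun_iff hcard]
  intro j
  have hcongr : ∀ {t : Finset ℕ} (ht : A = t) (h : #t = #A),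
      A.orderEmbOfFin rfl j = t.orderEmbOfFin h j := by
    rintro _ rfl _; rfl
  simp only [coe_orderIsoOfFin_apply, ccSample]
  rw [hcongr hA (by rw [← hA]), orderEmbOfFin_map]
  rfl

theorem ccStat_eq_of_ccIndices_eq (s : (k : ℕ) → (Fin k → X) → E) {v : Fin n → Bool × X}
    {A : Finset (Fin n)} (h : ccIndices v = A) : ccStat s v = s #A (ccSample A v) := by
  subst h; rfl

theorem setOf_ccIndices_eq (A : Finset (Fin n)) :
    {v : Fin n → Bool × X | ccIndices v = A} =
      Set.univ.pi fun i => {x : Bool × X | x.1 = decide (i ∈ A)} := by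
  ext v
  simp only [Set.mem_ofPred_eq, Set.mem_univ_pi, Finset.ext_iff, ccIndices, mem_filter,
    mem_univ, true_and]
  exact forall_congr' fun i => by by_cases h : i ∈ A <;> simp [h]

theorem preimage_ccStat (s : (k : ℕ) → (Fin k → X) → E) (C : Set E) :
    ccStat s ⁻¹' C = ⋃ A : Finset (Fin n),
      {v | ccIndices v = A} ∩ ccSample A ⁻¹' (s #A ⁻¹' C) := by
  ext v
  simp only [Set.mem_preimage, Set.mem_iUnion, Set.mem_inter_iff, Set.mem_ofPred_eq]
  exact ⟨fun h => ⟨_, rfl, h⟩, fun ⟨A, hA, h⟩ => by rwa [ccStat_eq_of_ccIndices_eq s hA]⟩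

variable [MeasurableSpace X]

theorem measurableSet_setOf_ccIndices_eq (A : Finset (Fin n)) :
    MeasurableSet {v : Fin n → Bool × X | ccIndices v = A} := by
  rw [setOf_ccIndices_eq]
  exact .univ_pi fun _ => measurable_fst (measurableSet_singleton _)

theorem measurable_ccSample (A : Finset (Fin n)) : Measurable (ccSample (X := X) A) :=
  measurable_pi_lambda _ fun _ => (measurable_pi_apply _).snd

theorem pi_setOf_ccIndices_eq_inter_preimage_ccSample (μ : Measure (Bool × X))
    [IsFiniteMeasure μ] (A : Finset (Fin n)) {T : Set (Fin #A → X)} (hT : MeasurableSet T) :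
    Measure.pi (fun _ : Fin n => μ) ({v | ccIndices v = A} ∩ ccSample A ⁻¹' T) =
      μ {x | x.1 = false} ^ (n - #A) *
        Measure.pi (fun _ : Fin #A => (μ.restrict {x | x.1 = true}).map Prod.snd) T := by
  have hcoord : ∀ i, MeasurableSet {x : Bool × X | x.1 = decide (i ∈ A)} :=
    fun _ => measurable_fst (measurableSet_singleton _)
  have hfactor : ccSample A = (fun w j => (w j).2) ∘ fun v : Fin n → Bool × X =>
      v ∘ A.orderEmbOfFin rfl := rfl
  rw [Set.inter_comm, setOf_ccIndices_eq, ← Measure.restrict_apply' (.univ_pi hcoord),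
    Measure.restrict_pi_pi, ← Measure.map_apply (measurable_ccSample A) hT, hfactor,
    ← Measure.map_map (measurable_pi_lambda _ fun j => (measurable_pi_apply j).snd)
      (measurable_pi_lambda (fun (v : Fin n → Bool × X) => v ∘ A.orderEmbOfFin rfl)
        fun j => measurable_pi_apply _),
    Measure.pi_map_comp_of_injective _ (A.orderEmbOfFin rfl).injective, Measure.map_smul,
    Measure.pi_map_pi fun _ => measurable_snd.aemeasurable, Measure.smul_apply, smul_eq_mul]
  congr 1
  · rw [image_orderEmbOfFin_univ, prod_congr rfl fun i hi => by
      rw [Measure.restrict_apply_univ, decide_eq_false (mem_compl.mp hi)],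
      prod_const, card_compl, Fintype.card_fin]
  · simp only [orderEmbOfFin_mem, decide_true]

variable [MeasurableSpace E] {s : (k : ℕ) → (Fin k → X) → E}

theorem measurable_ccStat (hs : ∀ k, Measurable (s k)) : Measurable (ccStat s (n := n)) := by
  intro C hC
  rw [preimage_ccStat]
  exact .iUnion fun A =>
    (measurableSet_setOf_ccIndices_eq A).inter (measurable_ccSample A (hs _ hC))

theorem map_ccStat_pi (hs : ∀ k, Measurable (s k)) (μ : Measure (Bool × X)) [IsFiniteMeasure μ] :
    (Measure.pi fun _ : Fin n => μ).map (ccStat s) =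
      ∑ A : Finset (Fin n), (μ {x | x.1 = true} ^ #A * μ {x | x.1 = false} ^ (n - #A)) •
        (Measure.pi fun _ : Fin #A => (μ[|{x | x.1 = true}]).map Prod.snd).map (s #A) := by
  ext C hC
  have hdisj : Pairwise (Function.onFun Disjoint fun A : Finset (Fin n) =>
      {v | ccIndices v = A} ∩ ccSample A ⁻¹' (s #A ⁻¹' C)) :=
    fun A B hAB => Set.disjoint_left.mpr fun v hvA hvB => hAB (hvA.1.symm.trans hvB.1)
  rw [Measure.map_apply (measurable_ccStat hs) hC, preimage_ccStat,
    measure_iUnion hdisj fun A => (measurableSet_setOf_ccIndices_eq A).inter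
      (measurable_ccSample A (hs _ hC)), tsum_fintype, Measure.coe_finsetSum, Finset.sum_apply]
  refine sum_congr rfl fun A _ => ?_
  rw [pi_setOf_ccIndices_eq_inter_preimage_ccSample μ A (hs _ hC), ← measure_smul_cond,
    Measure.map_smul, Measure.pi_smul _ fun _ => measure_ne_top μ _, prod_const, card_univ,
    Fintype.card_fin, Measure.smul_apply, Measure.smul_apply, Measure.map_apply (hs _) hC,
    smul_eq_mul, smul_eq_mul]
  ring

end CompleteCase

theorem complete_case_tendsto_zero_general {Ω X : Type*} [MeasurableSpace Ω] [MeasurableSpace X]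
    (P : Measure Ω) {m : ℕ}
    (s : (k : ℕ) → (Fin k → X) → (Fin m → ℝ)) (hs : ∀ k, Measurable (s k))
    (δ : ℕ → Ω → Bool) (ξ : ℕ → Ω → X)
    (hδ : ∀ j, Measurable (δ j)) (hξ : ∀ j, Measurable (ξ j))
    (μ : Measure (Bool × X)) [IsProbabilityMeasure μ]
    -- the `(δ_j, ξ_j)` are i.i.d. copies of a pair with law `μ`
    (hiid : ∀ n : ℕ, Measure.map (fun ω => fun j : Fin n => (δ j ω, ξ j ω)) P =
      Measure.pi (fun _ : Fin n => μ))
    -- `p = P(δ = 1) > 0`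
    (p : ℝ≥0∞) (hp : p = μ {x | x.1 = true}) (hp0 : 0 < p)
    -- `Q̃` is the conditional law of `ξ` given `δ = 1`
    (Q : Measure X) [IsProbabilityMeasure Q]
    (hQ : Q = p⁻¹ • Measure.map Prod.snd (μ.restrict {x | x.1 = true}))
    -- `s_n(ξ̃_1, …, ξ̃_n) → 0` in probability under i.i.d. `Q̃`-sampling
    (hs0 : ∀ ε : ℝ, 0 < ε →
      Tendsto (fun n : ℕ => Measure.pi (fun _ : Fin n => Q) {x | ε ≤ ‖s n x‖})
        atTop (nhds 0)) :
    -- the complete case statistic converges to `0` in probability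
    ∀ ε : ℝ, 0 < ε →
      Tendsto (fun n : ℕ => P {ω | ε ≤ ‖ccStatSeq s δ ξ n ω‖}) atTop (nhds 0) := by
  intro ε hε
  have hC : MeasurableSet {x : Fin m → ℝ | ε ≤ ‖x‖} :=
    measurableSet_le measurable_const measurable_norm
  have hsample : ∀ n, Measurable fun ω (j : Fin n) => (δ j ω, ξ j ω) :=
    fun n => measurable_pi_lambda _ fun j => (hδ j).prodMk (hξ j)
  have hQ_cond : Q = (μ[|{x | x.1 = true}]).map Prod.snd := by
    rw [hQ, hp, ProbabilityTheory.cond, Measure.map_smul]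
  have hlaw : ∀ n, P {ω | ε ≤ ‖ccStatSeq s δ ξ n ω‖} = ∑ A : Finset (Fin n),
      p ^ #A * μ {x | x.1 = false} ^ (n - #A) * Measure.pi (fun _ => Q) {x | ε ≤ ‖s #A x‖} := by
    intro n
    have hset : {ω | ε ≤ ‖ccStatSeq s δ ξ n ω‖} =
        (fun ω (j : Fin n) => (δ j ω, ξ j ω)) ⁻¹' (ccStat s ⁻¹' {x | ε ≤ ‖x‖}) := by
      ext ω
      simp [ccStatSeq_eq_ccStat]
    rw [hset, ← Measure.map_apply (hsample n) (measurable_ccStat hs hC), hiid,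
      ← Measure.map_apply (measurable_ccStat hs) hC, map_ccStat_pi hs, Measure.coe_finsetSum,
      Finset.sum_apply]
    refine sum_congr rfl fun A _ => ?_
    rw [Measure.smul_apply, Measure.map_apply (hs _) hC, smul_eq_mul, hp, hQ_cond]
    rfl
  have hpq : p + μ {x | x.1 = false} = 1 := by
    have hfalse : {x : Bool × X | x.1 = false} = {x | x.1 = true}ᶜ := by ext; simp
    rw [hp, hfalse, measure_add_measure_compl (s := {x : Bool × X | x.1 = true})
      (measurable_fst (measurableSet_singleton true)), measure_univ]
  rw [funext hlaw]
  exact tendsto_sum_pow_mul_pow_mul_of_tendsto_zero hpq hp0.ne'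
    (F := fun k => Measure.pi (fun _ => Q) {x | ε ≤ ‖s k x‖}) (fun _ => prob_le_one) (hs0 ε hε)

/-- The backbone of Remark 5 of Koul, Müller and Schick: if
`s_n(ξ̃_1, …, ξ̃_n) → 0` in probability for i.i.d. `ξ̃_i ∼ Q̃` (the conditional law of
`ξ` given `δ = 1`), then the complete case statistic `S_{c,n}` associated with `(s_k)`
converges to `0` in probability. -/
theorem complete_case_tendsto_zero {Ω X : Type*} [MeasurableSpace Ω] [MeasurableSpace X]
    (P : Measure Ω) [IsProbabilityMeasure P] {m : ℕ}
    (s : (k : ℕ) → (Fin k → X) → (Fin m → ℝ)) (hs : ∀ k, Measurable (s k))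
    (δ : ℕ → Ω → Bool) (ξ : ℕ → Ω → X)
    (hδ : ∀ j, Measurable (δ j)) (hξ : ∀ j, Measurable (ξ j))
    (μ : Measure (Bool × X)) [IsProbabilityMeasure μ]
    -- the `(δ_j, ξ_j)` are i.i.d. copies of a pair with law `μ`
    (hiid : ∀ n : ℕ, Measure.map (fun ω => fun j : Fin n => (δ j ω, ξ j ω)) P =
      Measure.pi (fun _ : Fin n => μ))
    -- `p = P(δ = 1) > 0`
    (p : ℝ≥0∞) (hp : p = μ {x | x.1 = true}) (hp0 : 0 < p)
    -- `Q̃` is the conditional law of `ξ` given `δ = 1`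
    (Q : Measure X) [IsProbabilityMeasure Q]
    (hQ : Q = p⁻¹ • Measure.map Prod.snd (μ.restrict {x | x.1 = true}))
    -- `s_n(ξ̃_1, …, ξ̃_n) → 0` in probability under i.i.d. `Q̃`-sampling
    (hs0 : ∀ ε : ℝ, 0 < ε →
      Tendsto (fun n : ℕ => Measure.pi (fun _ : Fin n => Q) {x | ε ≤ ‖s n x‖})
        atTop (nhds 0)) :
    -- the complete case statistic converges to `0` in probability
    ∀ ε : ℝ, 0 < ε →
      Tendsto (fun n : ℕ => P {ω | ε ≤ ‖ccStatSeq s δ ξ n ω‖}) atTop (nhds 0) :=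
  complete_case_tendsto_zero_general P s hs δ ξ hδ hξ μ hiid p hp hp0 Q hQ hs0
end
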